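/- Set N_n = 4^n and δ_n = exp(-4^{2n}). Then with f̃_n of the same Cantor-type form as before (height δ_n^{-2}N_n^{-1} on N_n disks of radius δ_n, linear cutoff on annuli of width δ_n), one has ||f̃_n||_{L^2}^2 comparable to 4^{-n} e^{2·4^{2n}}, ||∇f̃_n||_{L^2} comparable to 4^{-n/2} e^{2·4^{2n}}, and consequently the ratio S_n = ||f̃_n||_{L^2}^2 (log ||∇f̃_n||_{L^2})^{1/4} / ||∇f̃_n||_{L^2} satisfies 0 < liminf S_n ≤ limsup S_n < ∞ while ||f̃_n||_{L^2} → ∞. -/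

import Mathlib

open MeasureTheory Metric Real Set Filter

noncomputable section

abbrev E2 : Type := EuclideanSpace ℝ (Fin 2)

def cantorFun (δ : ℝ) (N : ℕ) (c : Fin N → E2) (x : E2) : ℝ :=
  ∑ i, (1 / δ ^ 2) * (1 / (N : ℝ)) * max 0 (min 1 (2 - dist x (c i) / δ))

def cantorGradNorm (δ : ℝ) (N : ℕ) (c : Fin N → E2) (x : E2) : ℝ :=
  Set.indicator (⋃ i, Metric.ball (c i) (2 * δ) \ Metric.closedBall (c i) δ)
    (fun _ => (1 / δ ^ 3) * (1 / (N : ℝ))) x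

/-- Scale of the sparse Cantor construction: `δ_n = exp(-4^{2n})`. -/
def δlog (n : ℕ) : ℝ := Real.exp (-(4:ℝ) ^ (2 * n))

def L2sqC (n : ℕ) (c : Fin (4 ^ n) → E2) : ℝ :=
  ∫ x : E2, (cantorFun (δlog n) (4 ^ n) c x) ^ 2

def gradL2C (n : ℕ) (c : Fin (4 ^ n) → E2) : ℝ :=
  Real.sqrt (∫ x : E2, (cantorGradNorm (δlog n) (4 ^ n) c x) ^ 2)

/-- The Nash ratio `S_n = ‖f̃_n‖_{L²}² (log‖∇f̃_n‖_{L²})^{1/4} / ‖∇f̃_n‖_{L²}`. -/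
def SC (n : ℕ) (c : Fin (4 ^ n) → E2) : ℝ :=
  L2sqC n c * Real.log (gradL2C n c) ^ ((1:ℝ)/4) / gradL2C n c


/-! ### Auxiliary lemmas -/

lemma volE2_ball (x : E2) (r : ℝ) (hr : 0 ≤ r) :
    volume (ball x r) = ENNReal.ofReal (π * r ^ 2) := by
  rw [EuclideanSpace.volume_ball]
  simp only [Fintype.card_fin]
  rw [show ((2:ℕ):ℝ)/2 + 1 = 2 by norm_num, Real.Gamma_two]
  rw [← ENNReal.ofReal_pow hr, ← ENNReal.ofReal_mul (by positivity)]
  rw [div_one, Real.sq_sqrt pi_pos.le]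
  ring_nf

lemma volE2_closedBall (x : E2) (r : ℝ) (hr : 0 ≤ r) :
    volume (closedBall x r) = ENNReal.ofReal (π * r ^ 2) := by
  rw [Measure.addHaar_closedBall_eq_addHaar_ball, volE2_ball x r hr]

def bump (δ : ℝ) (y x : E2) : ℝ := max 0 (min 1 (2 - dist x y / δ))

lemma bump_nonneg (δ : ℝ) (y x : E2) : 0 ≤ bump δ y x := le_max_left _ _

lemma bump_le_one (δ : ℝ) (y x : E2) : bump δ y x ≤ 1 :=
  max_le zero_le_one (min_le_left _ _)

lemma bump_eq_one {δ : ℝ} (hδ : 0 < δ) {y x : E2} (h : x ∈ closedBall y δ) :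
    bump δ y x = 1 := by
  rw [mem_closedBall] at h
  have h1 : dist x y / δ ≤ 1 := (div_le_one hδ).2 h
  have : min 1 (2 - dist x y / δ) = 1 := min_eq_left (by linarith)
  rw [bump, this, max_eq_right zero_le_one]

lemma bump_eq_zero {δ : ℝ} (hδ : 0 < δ) {y x : E2} (h : x ∉ ball y (2*δ)) :
    bump δ y x = 0 := by
  rw [mem_ball, not_lt] at h
  have h1 : (2:ℝ) ≤ dist x y / δ := (le_div_iff₀ hδ).2 (by linarith)
  have h2 : min 1 (2 - dist x y / δ) ≤ 0 := (min_le_right _ _).trans (by linarith)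
  exact max_eq_left h2

lemma bump_continuous (δ : ℝ) (y : E2) : Continuous (bump δ y) :=
  continuous_const.max (continuous_const.min
    (continuous_const.sub ((continuous_id.dist continuous_const).div_const δ)))

lemma sq_sum_eq_sum_sq {N : ℕ} (a : Fin N → ℝ)
    (h : ∀ i j, i ≠ j → a i * a j = 0) :
    (∑ i, a i) ^ 2 = ∑ i, a i ^ 2 := by
  rw [sq, Finset.sum_mul_sum]
  refine Finset.sum_congr rfl fun i _ => ?_
  rw [Finset.sum_eq_single i (fun j _ hj => h i j (Ne.symm hj)) (by simp), sq]

lemma cantorFun_eq (δ : ℝ) (N : ℕ) (c : Fin N → E2) (x : E2) :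
    cantorFun δ N c x = ∑ i, (1 / δ ^ 2) * (1 / (N : ℝ)) * bump δ (c i) x := rfl

section Integrals

variable {δ : ℝ} {N : ℕ} (c : Fin N → E2)

lemma cantorFun_sq_integrable (hδ : 0 < δ) :
    Integrable (fun x : E2 => cantorFun δ N c x ^ 2) := by
  have hcont : Continuous (cantorFun δ N c) :=
    continuous_finset_sum _ fun i _ => continuous_const.mul (bump_continuous δ (c i))
  refine ((hcont.pow 2).integrable_of_hasCompactSupport ?_)
  apply HasCompactSupport.intro (K := ⋃ i, closedBall (c i) (2*δ))
    (isCompact_iUnion fun i => isCompact_closedBall _ _)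
  intro x hx
  have hz : ∀ i : Fin N, bump δ (c i) x = 0 := fun i =>
    bump_eq_zero hδ fun hmem => hx (mem_iUnion.2 ⟨i, ball_subset_closedBall hmem⟩)
  simp [cantorFun_eq, hz]

lemma indicator_sum_integrable (r : ℝ) (k : ℝ) :
    Integrable (fun x : E2 =>
      ∑ i, Set.indicator (closedBall (c i) r) (fun _ => k) x) :=
  integrable_finset_sum _ fun i _ =>
    ((integrableOn_const measure_closedBall_lt_top.ne).integrable_indicator
      measurableSet_closedBall)

lemma integral_indicator_sum (r : ℝ) (hr : 0 ≤ r) (k : ℝ) :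
    ∫ x : E2, (∑ i, Set.indicator (closedBall (c i) r) (fun _ => k) x) =
      (N : ℝ) * (π * r ^ 2 * k) := by
  rw [integral_finset_sum _ fun i _ =>
    ((integrableOn_const measure_closedBall_lt_top.ne).integrable_indicator
      measurableSet_closedBall)]
  have hone : ∀ i : Fin N, ∫ x : E2, Set.indicator (closedBall (c i) r) (fun _ => k) x
      = π * r ^ 2 * k := by
    intro i
    rw [integral_indicator_const k measurableSet_closedBall, measureReal_def, volE2_closedBall _ _ hr,
      ENNReal.toReal_ofReal (by positivity), smul_eq_mul]
  simp only [hone, Finset.sum_const, Finset.card_univ, Fintype.card_fin, nsmul_eq_mul]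

lemma L2_lower (hδ : 0 < δ) :
    π * δ^2 * (N:ℝ) * ((1/δ^2)*(1/(N:ℝ)))^2 ≤ ∫ x : E2, cantorFun δ N c x ^ 2 := by
  set h : ℝ := (1/δ^2)*(1/(N:ℝ)) with hh
  have key : ∀ x : E2,
      (∑ i, Set.indicator (closedBall (c i) δ) (fun _ => h^2) x) ≤ cantorFun δ N c x ^ 2 := by
    intro x
    calc ∑ i, Set.indicator (closedBall (c i) δ) (fun _ => h^2) x
        ≤ ∑ i, (h * bump δ (c i) x)^2 := by
          refine Finset.sum_le_sum fun i _ => ?_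
          by_cases hx : x ∈ closedBall (c i) δ
          · simp [Set.indicator_of_mem hx, bump_eq_one hδ hx]
          · rw [Set.indicator_of_notMem hx]; positivity
      _ ≤ (∑ i, h * bump δ (c i) x)^2 :=
          Finset.sum_sq_le_sq_sum_of_nonneg fun i _ => by
            have := bump_nonneg δ (c i) x; positivity
      _ = cantorFun δ N c x ^ 2 := by rw [cantorFun_eq]
  have hle := integral_mono (indicator_sum_integrable c δ (h^2))
    (cantorFun_sq_integrable c hδ) key
  rw [integral_indicator_sum c δ hδ.le (h^2)] at hle
  calc π * δ^2 * (N:ℝ) * h^2 = (N:ℝ) * (π * δ^2 * h^2) := by ring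
    _ ≤ _ := hle

lemma L2_upper (hδ : 0 < δ)
    (hdisj : Pairwise fun i j : Fin N =>
      Disjoint (ball (c i) (2 * δ)) (ball (c j) (2 * δ))) :
    ∫ x : E2, cantorFun δ N c x ^ 2 ≤ 4 * π * δ^2 * (N:ℝ) * ((1/δ^2)*(1/(N:ℝ)))^2 := by
  set h : ℝ := (1/δ^2)*(1/(N:ℝ)) with hh
  have key : ∀ x : E2, cantorFun δ N c x ^ 2 ≤
      ∑ i, Set.indicator (closedBall (c i) (2*δ)) (fun _ => h^2) x := by
    intro x
    have heq : cantorFun δ N c x ^ 2 = ∑ i, (h * bump δ (c i) x)^2 := by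
      rw [cantorFun_eq]
      apply sq_sum_eq_sum_sq
      intro i j hij
      by_cases hx : x ∈ ball (c i) (2*δ)
      · have hxj : x ∉ ball (c j) (2*δ) := fun hxj =>
          (Set.disjoint_left.1 (hdisj hij) hx) hxj
        rw [bump_eq_zero hδ hxj, mul_zero, mul_zero]
      · rw [bump_eq_zero hδ hx, mul_zero, zero_mul]
    rw [heq]
    refine Finset.sum_le_sum fun i _ => ?_
    by_cases hx : x ∈ closedBall (c i) (2*δ)
    · rw [Set.indicator_of_mem hx, mul_pow]
      have hb1 : bump δ (c i) x ^ 2 ≤ 1 :=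
        pow_le_one₀ (bump_nonneg δ (c i) x) (bump_le_one δ (c i) x)
      exact mul_le_of_le_one_right (sq_nonneg h) hb1
    · have hx' : x ∉ ball (c i) (2*δ) := fun hb => hx (ball_subset_closedBall hb)
      rw [Set.indicator_of_notMem hx, bump_eq_zero hδ hx', mul_zero]
      simp
  have hle := integral_mono (cantorFun_sq_integrable c hδ)
    (indicator_sum_integrable c (2*δ) (h^2)) key
  rw [integral_indicator_sum c (2*δ) (by positivity) (h^2)] at hle
  calc ∫ x : E2, cantorFun δ N c x ^ 2 ≤ (N:ℝ) * (π * (2*δ)^2 * h^2) := hle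
    _ = 4 * π * δ^2 * (N:ℝ) * h^2 := by ring

lemma grad_sq_integral (hδ : 0 < δ)
    (hdisj : Pairwise fun i j : Fin N =>
      Disjoint (ball (c i) (2 * δ)) (ball (c j) (2 * δ))) :
    ∫ x : E2, cantorGradNorm δ N c x ^ 2 =
      (N:ℝ) * (3 * π * δ^2) * ((1/δ^3)*(1/(N:ℝ)))^2 := by
  set g : ℝ := (1/δ^3)*(1/(N:ℝ)) with hg
  set U : Set E2 := ⋃ i, ball (c i) (2 * δ) \ closedBall (c i) δ with hU
  have hUmeas : MeasurableSet U :=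
    MeasurableSet.iUnion fun i => measurableSet_ball.diff measurableSet_closedBall
  have hptw : ∀ x : E2, cantorGradNorm δ N c x ^ 2 =
      Set.indicator U (fun _ => g^2) x := by
    intro x
    rw [cantorGradNorm]
    by_cases hx : x ∈ U
    · rw [Set.indicator_of_mem hx, Set.indicator_of_mem hx]
    · rw [Set.indicator_of_notMem hx, Set.indicator_of_notMem hx]
      norm_num
  have hvol : volume U = (N : ENNReal) * ENNReal.ofReal (3 * π * δ^2) := by
    rw [hU, measure_iUnion
      (fun i j hij => ((hdisj hij).mono diff_subset diff_subset))
      (fun i => measurableSet_ball.diff measurableSet_closedBall)]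
    have hone : ∀ i : Fin N,
        volume (ball (c i) (2 * δ) \ closedBall (c i) δ) = ENNReal.ofReal (3 * π * δ^2) := by
      intro i
      rw [measure_diff (closedBall_subset_ball (by linarith))
        measurableSet_closedBall.nullMeasurableSet
        (ne_of_lt measure_closedBall_lt_top),
        volE2_ball _ _ (by positivity), volE2_closedBall _ _ hδ.le,
        ← ENNReal.ofReal_sub _ (by positivity)]
      congr 1
      ring
    simp only [hone, tsum_fintype, Finset.sum_const, Finset.card_univ, Fintype.card_fin,
      nsmul_eq_mul]
  calc ∫ x : E2, cantorGradNorm δ N c x ^ 2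
      = ∫ x : E2, Set.indicator U (fun _ => g^2) x :=
        integral_congr_ae (Filter.Eventually.of_forall hptw)
    _ = (volume U).toReal • (g^2) := integral_indicator_const _ hUmeas
    _ = (N:ℝ) * (3 * π * δ^2) * g^2 := by
        rw [hvol, ENNReal.toReal_mul, ENNReal.toReal_natCast,
          ENNReal.toReal_ofReal (by positivity), smul_eq_mul]

end Integrals

/-! ### Specialization to `δ = δlog n`, `N = 4 ^ n` -/

lemma δlog_pos (n : ℕ) : 0 < δlog n := Real.exp_pos _

lemma inv_δsq (n : ℕ) : ((δlog n)^2)⁻¹ = Real.exp (2 * (4:ℝ)^(2*n)) := by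
  rw [δlog, ← Real.exp_nat_mul, ← Real.exp_neg]
  congr 1
  push_cast
  ring

lemma inv_N4 (n : ℕ) : (((4:ℕ)^n : ℕ):ℝ)⁻¹ = (4:ℝ) ^ (-(n:ℝ)) := by
  push_cast
  rw [← Real.rpow_natCast 4 n, ← Real.rpow_neg (by norm_num)]

lemma four_mul_le_sixteen_pow (n : ℕ) : 4 * n ≤ 16 ^ n := by
  induction n with
  | zero => simp
  | succ n ih =>
    have h1 : (1:ℕ) ≤ 16 ^ n := Nat.one_le_pow _ _ (by norm_num)
    calc 4 * (n+1) = 4*n + 4 := by ring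
      _ ≤ 16^n + 4 := by omega
      _ ≤ 16^(n+1) := by rw [pow_succ]; omega

lemma L2sqC_bounds (n : ℕ) (c : Fin (4^n) → E2)
    (hdisj : Pairwise fun i j : Fin (4^n) =>
      Disjoint (ball (c i) (2 * δlog n)) (ball (c j) (2 * δlog n))) :
    π * ((4:ℝ) ^ (-(n:ℝ)) * Real.exp (2 * (4:ℝ) ^ (2 * n))) ≤ L2sqC n c ∧
      L2sqC n c ≤ 4 * π * ((4:ℝ) ^ (-(n:ℝ)) * Real.exp (2 * (4:ℝ) ^ (2 * n))) := by
  set δ : ℝ := δlog n with hδdef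
  have hδ : 0 < δ := δlog_pos n
  have hNpos : (0:ℝ) < ((4^n : ℕ):ℝ) := by positivity
  have heq : δ^2 * ((4^n:ℕ):ℝ) * ((1/δ^2)*(1/((4^n:ℕ):ℝ)))^2
      = (4:ℝ) ^ (-(n:ℝ)) * Real.exp (2 * (4:ℝ) ^ (2 * n)) := by
    have h1 : δ^2 * ((4^n:ℕ):ℝ) * ((1/δ^2)*(1/((4^n:ℕ):ℝ)))^2
        = ((δ^2)⁻¹) * (((4^n:ℕ):ℝ)⁻¹) := by
      field_simp
    rw [h1, hδdef, inv_δsq, inv_N4, mul_comm]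
  constructor
  · have h1 := L2_lower c hδ
    calc π * ((4:ℝ) ^ (-(n:ℝ)) * Real.exp (2 * (4:ℝ) ^ (2 * n)))
        = π * δ^2 * ((4^n:ℕ):ℝ) * ((1/δ^2)*(1/((4^n:ℕ):ℝ)))^2 := by rw [← heq]; ring
      _ ≤ L2sqC n c := h1
  · have h2 := L2_upper c hδ hdisj
    calc L2sqC n c ≤ 4 * π * δ^2 * ((4^n:ℕ):ℝ) * ((1/δ^2)*(1/((4^n:ℕ):ℝ)))^2 := h2
      _ = 4 * π * ((4:ℝ) ^ (-(n:ℝ)) * Real.exp (2 * (4:ℝ) ^ (2 * n))) := by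
          rw [← heq]; ring

lemma rpow_half_sq (n : ℕ) : ((4:ℝ) ^ (-(n:ℝ)/2)) ^ 2 = (4:ℝ) ^ (-(n:ℝ)) := by
  rw [← Real.rpow_natCast ((4:ℝ) ^ (-(n:ℝ)/2)) 2, ← Real.rpow_mul (by norm_num)]
  norm_num

lemma gradL2C_eq (n : ℕ) (c : Fin (4^n) → E2)
    (hdisj : Pairwise fun i j : Fin (4^n) =>
      Disjoint (ball (c i) (2 * δlog n)) (ball (c j) (2 * δlog n))) :
    gradL2C n c = Real.sqrt (3*π) *
      ((4:ℝ) ^ (-(n:ℝ)/2) * Real.exp (2 * (4:ℝ) ^ (2 * n))) := by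
  set δ : ℝ := δlog n with hδdef
  have hδ : 0 < δ := δlog_pos n
  have hNpos : (0:ℝ) < ((4^n : ℕ):ℝ) := by positivity
  have hval : ((4^n:ℕ):ℝ) * (3 * π * δ^2) * ((1/δ^3)*(1/((4^n:ℕ):ℝ)))^2
      = (Real.sqrt (3*π) * ((4:ℝ) ^ (-(n:ℝ)/2) * Real.exp (2 * (4:ℝ) ^ (2 * n))))^2 := by
    have h1 : ((4^n:ℕ):ℝ) * (3 * π * δ^2) * ((1/δ^3)*(1/((4^n:ℕ):ℝ)))^2
        = 3 * π * ((δ^2)⁻¹)^2 * (((4^n:ℕ):ℝ)⁻¹) := by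
      field_simp
    rw [h1, hδdef, inv_δsq, inv_N4, mul_pow, Real.sq_sqrt (by positivity), mul_pow,
      rpow_half_sq]
    ring
  rw [gradL2C, grad_sq_integral c hδ hdisj, hval, Real.sqrt_sq (by positivity)]


set_option maxHeartbeats 1000000 in
lemma perN_bounds (n : ℕ) (hn : 1 ≤ n) (c : Fin (4^n) → E2)
    (hdisj : Pairwise fun i j : Fin (4^n) =>
      Disjoint (ball (c i) (2 * δlog n)) (ball (c j) (2 * δlog n))) :
    ((1:ℝ) * ((4:ℝ) ^ (-(n:ℝ)) * Real.exp (2 * (4:ℝ) ^ (2 * n))) ≤ L2sqC n c ∧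
      L2sqC n c ≤ 16 * ((4:ℝ) ^ (-(n:ℝ)) * Real.exp (2 * (4:ℝ) ^ (2 * n)))) ∧
    ((1:ℝ) * ((4:ℝ) ^ (-(n:ℝ)/2) * Real.exp (2 * (4:ℝ) ^ (2 * n))) ≤ gradL2C n c ∧
      gradL2C n c ≤ 16 * ((4:ℝ) ^ (-(n:ℝ)/2) * Real.exp (2 * (4:ℝ) ^ (2 * n)))) ∧
    ((1:ℝ) ≤ SC n c ∧ SC n c ≤ 16) := by
  have hs3 : (3:ℝ) ≤ Real.sqrt (3*π) :=
    (Real.le_sqrt (by norm_num) (by positivity)).2 (by nlinarith [pi_gt_three])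
  have hspos : (0:ℝ) < Real.sqrt (3*π) := lt_of_lt_of_le (by norm_num) hs3
  have hsπ : Real.sqrt (3*π) ≤ π :=
    Real.sqrt_le_iff.2 ⟨pi_pos.le, by nlinarith [pi_gt_three]⟩
  have hs4 : Real.sqrt (3*π) ≤ 4 :=
    Real.sqrt_le_iff.2 ⟨by norm_num, by nlinarith [pi_le_four]⟩
  set A : ℝ := (4:ℝ) ^ (2*n) with hAdef
  have hA16 : A = 16^n := by rw [hAdef, pow_mul]; norm_num
  have hA : (16:ℝ) ≤ A := by
    rw [hA16]
    calc (16:ℝ) = 16^1 := (pow_one _).symm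
      _ ≤ 16^n := pow_le_pow_right₀ (by norm_num) hn
  have h4n : (4:ℝ) * n ≤ A := by
    rw [hA16]
    exact_mod_cast four_mul_le_sixteen_pow n
  set E : ℝ := Real.exp (2 * A) with hEdef
  have hE : 0 < E := Real.exp_pos _
  set K : ℝ := (4:ℝ) ^ (-(n:ℝ)) * E with hKdef
  have hK : 0 < K := by rw [hKdef]; positivity
  set Y : ℝ := (4:ℝ) ^ (-(n:ℝ)/2) * E with hYdef
  have hY : 0 < Y := by rw [hYdef]; positivity
  obtain ⟨hL1, hL2⟩ := L2sqC_bounds n c hdisj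
  have hL1 : π * K ≤ L2sqC n c := hL1
  have hL2 : L2sqC n c ≤ 4 * π * K := hL2
  have hG : gradL2C n c = Real.sqrt (3*π) * Y := gradL2C_eq n c hdisj
  have hGpos : 0 < gradL2C n c := by
    rw [hG]; exact mul_pos hspos hY
  have hLpos : 0 < L2sqC n c := lt_of_lt_of_le (mul_pos pi_pos hK) hL1
  have hlogG : Real.log (gradL2C n c) =
      Real.log (Real.sqrt (3*π)) + (-(n:ℝ)/2) * Real.log 4 + 2*A := by
    rw [hG, hYdef, hEdef, Real.log_mul hspos.ne' (by positivity),
      Real.log_mul (by positivity) (Real.exp_pos _).ne', Real.log_rpow (by norm_num),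
      Real.log_exp]
    ring
  have hlog4u : Real.log 4 ≤ 3 := by
    have := Real.log_le_sub_one_of_pos (show (0:ℝ) < 4 by norm_num); linarith
  have hlog4l : 0 ≤ Real.log 4 := Real.log_nonneg (by norm_num)
  have hlogs0 : 0 ≤ Real.log (Real.sqrt (3*π)) := Real.log_nonneg (by linarith)
  have hlogs3 : Real.log (Real.sqrt (3*π)) ≤ 3 :=
    (Real.log_le_sub_one_of_pos hspos).trans (by linarith)
  have hnn : (0:ℝ) ≤ (n:ℝ) := Nat.cast_nonneg n
  have hlb : A ≤ Real.log (gradL2C n c) := by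
    rw [hlogG]
    have h1 : ((n:ℝ)/2) * Real.log 4 ≤ ((n:ℝ)/2) * 3 :=
      mul_le_mul_of_nonneg_left hlog4u (by positivity)
    nlinarith
  have hub : Real.log (gradL2C n c) ≤ 3*A := by
    rw [hlogG]
    have h1 : (-(n:ℝ)/2) * Real.log 4 ≤ 0 :=
      mul_nonpos_of_nonpos_of_nonneg (by linarith) hlog4l
    linarith
  have hlogGpos : 0 < Real.log (gradL2C n c) := lt_of_lt_of_le (by linarith) hlb
  set P : ℝ := Real.log (gradL2C n c) ^ ((1:ℝ)/4) with hPdef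
  have hA4 : A ^ ((1:ℝ)/4) = (4:ℝ) ^ ((n:ℝ)/2) := by
    rw [hAdef, ← Real.rpow_natCast 4 (2*n), ← Real.rpow_mul (by norm_num)]
    push_cast
    ring_nf
  have hPl : (4:ℝ) ^ ((n:ℝ)/2) ≤ P := by
    rw [← hA4, hPdef]
    exact Real.rpow_le_rpow (by positivity) hlb (by norm_num)
  have h3q : (3:ℝ) ^ ((1:ℝ)/4) ≤ 2 := by
    have h := Real.rpow_le_rpow (by norm_num : (0:ℝ) ≤ 3)
      (by norm_num : (3:ℝ) ≤ 16) (by norm_num : (0:ℝ) ≤ (1:ℝ)/4)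
    have h16 : (16:ℝ) ^ ((1:ℝ)/4) = 2 := by
      rw [show (16:ℝ) = 2^(4:ℕ) by norm_num, ← Real.rpow_natCast 2 4,
        ← Real.rpow_mul (by norm_num)]
      norm_num
    linarith [h, h16.le, h16.ge]
  have hPu : P ≤ 2 * (4:ℝ) ^ ((n:ℝ)/2) := by
    have h1 : P ≤ (3*A) ^ ((1:ℝ)/4) :=
      Real.rpow_le_rpow hlogGpos.le hub (by norm_num)
    rw [Real.mul_rpow (by norm_num) (by positivity), hA4] at h1
    exact h1.trans (mul_le_mul_of_nonneg_right h3q (by positivity))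
  have hPpos : 0 ≤ P := Real.rpow_nonneg hlogGpos.le _
  have hKA : K * (4:ℝ) ^ ((n:ℝ)/2) = Y := by
    have h1 : (4:ℝ) ^ (-(n:ℝ)) * (4:ℝ) ^ ((n:ℝ)/2) = (4:ℝ) ^ (-(n:ℝ)/2) := by
      rw [← Real.rpow_add (by norm_num)]; ring_nf
    rw [hKdef, hYdef, ← h1]; ring
  refine ⟨⟨?_, ?_⟩, ⟨?_, ?_⟩, ?_, ?_⟩
  · calc (1:ℝ) * K ≤ π * K :=
        mul_le_mul_of_nonneg_right (by linarith [pi_gt_three]) hK.le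
      _ ≤ L2sqC n c := hL1
  · calc L2sqC n c ≤ 4 * π * K := hL2
      _ ≤ 16 * K := mul_le_mul_of_nonneg_right (by linarith [pi_le_four]) hK.le
  · rw [hG]
    exact mul_le_mul_of_nonneg_right (by linarith) hY.le
  · rw [hG]
    exact mul_le_mul_of_nonneg_right (by linarith) hY.le
  · have hnum : gradL2C n c ≤ L2sqC n c * P := by
      calc gradL2C n c = Real.sqrt (3*π) * Y := hG
        _ ≤ π * Y := mul_le_mul_of_nonneg_right hsπ hY.le
        _ = (π * K) * ((4:ℝ) ^ ((n:ℝ)/2)) := by rw [← hKA]; ring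
        _ ≤ L2sqC n c * P :=
            mul_le_mul hL1 hPl (by positivity) hLpos.le
    rw [SC, ← hPdef, le_div_iff₀ hGpos, one_mul]
    exact hnum
  · have hnum2 : L2sqC n c * P ≤ 16 * gradL2C n c := by
      calc L2sqC n c * P
          ≤ (4*π*K) * (2*(4:ℝ) ^ ((n:ℝ)/2)) :=
            mul_le_mul hL2 hPu hPpos (by positivity)
        _ = 8*π*(K * (4:ℝ) ^ ((n:ℝ)/2)) := by ring
        _ = 8*π*Y := by rw [hKA]
        _ ≤ 32*Y := mul_le_mul_of_nonneg_right (by linarith [pi_le_four]) hY.le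
        _ ≤ (16*Real.sqrt (3*π))*Y := mul_le_mul_of_nonneg_right (by linarith) hY.le
        _ = 16 * (Real.sqrt (3*π) * Y) := by ring
        _ = 16 * gradL2C n c := by rw [hG]
    rw [SC, ← hPdef, div_le_iff₀ hGpos]
    exact hnum2

set_option maxHeartbeats 1000000 in
lemma L2_diverges (c : ∀ n : ℕ, Fin (4 ^ n) → E2)
    (hdisj : ∀ n : ℕ, Pairwise fun i j =>
      Disjoint (Metric.ball (c n i) (2 * δlog n)) (Metric.ball (c n j) (2 * δlog n))) :
    Filter.Tendsto (fun n => Real.sqrt (L2sqC n (c n))) Filter.atTop Filter.atTop := by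
  have htend : Tendsto (fun n : ℕ => Real.exp ((16:ℝ)^n / 2)) atTop atTop :=
    Real.tendsto_exp_atTop.comp
      ((tendsto_pow_atTop_atTop_of_one_lt (by norm_num : (1:ℝ) < 16)).atTop_div_const
        (by norm_num))
  refine tendsto_atTop_mono' atTop ?_ htend
  filter_upwards [eventually_ge_atTop 1] with n hn
  have hL1 := (L2sqC_bounds n (c n) (hdisj n)).1
  have hA16 : ((4:ℝ) ^ (2*n) : ℝ) = 16^n := by rw [pow_mul]; norm_num
  have h4n : (4:ℝ) * n ≤ 16^n := by exact_mod_cast four_mul_le_sixteen_pow n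
  have hXpos : (0:ℝ) < (4:ℝ) ^ (-(n:ℝ)) * Real.exp (2 * (4:ℝ)^(2*n)) := by positivity
  have hKexp : Real.exp ((16:ℝ)^n) ≤ (4:ℝ) ^ (-(n:ℝ)) * Real.exp (2 * (4:ℝ)^(2*n)) := by
    have h1 : (4:ℝ) ^ (-(n:ℝ)) = Real.exp (-((n:ℝ) * Real.log 4)) := by
      rw [Real.rpow_def_of_pos (by norm_num)]
      ring_nf
    rw [h1, ← Real.exp_add, hA16]
    apply Real.exp_le_exp.2
    have hlog4u : Real.log 4 ≤ 3 := by
      have := Real.log_le_sub_one_of_pos (show (0:ℝ) < 4 by norm_num); linarith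
    have hnn : (0:ℝ) ≤ (n:ℝ) := Nat.cast_nonneg n
    nlinarith
  have hL : Real.exp ((16:ℝ)^n) ≤ L2sqC n (c n) := by
    have hπK : Real.exp ((16:ℝ)^n) ≤
        π * ((4:ℝ) ^ (-(n:ℝ)) * Real.exp (2 * (4:ℝ)^(2*n))) := by
      calc Real.exp ((16:ℝ)^n) ≤ (4:ℝ) ^ (-(n:ℝ)) * Real.exp (2 * (4:ℝ)^(2*n)) := hKexp
        _ = 1 * ((4:ℝ) ^ (-(n:ℝ)) * Real.exp (2 * (4:ℝ)^(2*n))) := (one_mul _).symm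
        _ ≤ π * ((4:ℝ) ^ (-(n:ℝ)) * Real.exp (2 * (4:ℝ)^(2*n))) :=
            mul_le_mul_of_nonneg_right (by linarith [pi_gt_three]) hXpos.le
    exact hπK.trans hL1
  calc Real.exp ((16:ℝ)^n / 2) = Real.sqrt (Real.exp ((16:ℝ)^n)) := Real.exp_half _
    _ ≤ Real.sqrt (L2sqC n (c n)) := Real.sqrt_le_sqrt hL

/-- For `N_n = 4ⁿ`, `δ_n = exp(-4^{2n})` and the Cantor-type functions `f̃_n` on pairwise
disjoint disks: `‖f̃_n‖_{L²}² ∼ 4^{-n} e^{2·4^{2n}}`, `‖∇f̃_n‖_{L²} ∼ 4^{-n/2} e^{2·4^{2n}}`,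
the ratio `S_n` is bounded above and below by positive constants (so
`0 < liminf S_n ≤ limsup S_n < ∞`), and `‖f̃_n‖_{L²} → ∞`. -/
theorem cantor_saturates_log_nash
    (c : ∀ n : ℕ, Fin (4 ^ n) → E2)
    (hdisj : ∀ n : ℕ, Pairwise fun i j =>
      Disjoint (Metric.ball (c n i) (2 * δlog n)) (Metric.ball (c n j) (2 * δlog n))) :
    ∃ c₁ c₂ : ℝ, 0 < c₁ ∧ 0 < c₂ ∧
      (∀ n : ℕ, 1 ≤ n →
        (c₁ * ((4:ℝ) ^ (-(n:ℝ)) * Real.exp (2 * (4:ℝ) ^ (2 * n))) ≤ L2sqC n (c n) ∧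
          L2sqC n (c n) ≤ c₂ * ((4:ℝ) ^ (-(n:ℝ)) * Real.exp (2 * (4:ℝ) ^ (2 * n)))) ∧
        (c₁ * ((4:ℝ) ^ (-(n:ℝ)/2) * Real.exp (2 * (4:ℝ) ^ (2 * n))) ≤ gradL2C n (c n) ∧
          gradL2C n (c n) ≤ c₂ * ((4:ℝ) ^ (-(n:ℝ)/2) * Real.exp (2 * (4:ℝ) ^ (2 * n)))) ∧
        (c₁ ≤ SC n (c n) ∧ SC n (c n) ≤ c₂)) ∧
      Filter.Tendsto (fun n => Real.sqrt (L2sqC n (c n))) Filter.atTop Filter.atTop :=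
  ⟨1, 16, one_pos, by norm_num,
    fun n hn => perN_bounds n hn (c n) (hdisj n), L2_diverges c hdisj⟩
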